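/- Let ε ∈ (0,1) and C > 0, and let (α_n)_{n≥0} be a sequence of real numbers with α_n ≥ 1 for all n and satisfying the recursive bound α_{n+1} ≤ α_n + C α_n^{(1+ε)/2} for all n ≥ 0. Then there is a constant C' > 0, depending only on C, ε and α₀, such that α_n ≤ C' (1+n)^{2/(1−ε)} for all n ≥ 0. -/

import Mathlib

open MeasureTheory Real Set Filter
open scoped BigOperators Topology

noncomputable section

/-- Lattice index set: `n : Fin d → ℤ` represents the point `h • n ∈ hℤ^d`. -/
abbrev LatPt (d : ℕ) := Fin d → ℤ

/-- Continuous space `ℝ^d` (with the product Lebesgue measure). -/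
abbrev Rd (d : ℕ) := Fin d → ℝ

variable {d : ℕ}

/-- `j`-th canonical basis vector of the lattice. -/
def unitVec (d : ℕ) (j : Fin d) : LatPt d := fun i => if i = j then 1 else 0

/-- The point of `ℝ^d` corresponding to the lattice index `n`, namely `a = h n`. -/
def latx (h : ℝ) (n : LatPt d) : Rd d := fun j => h * (n j : ℝ)

/-- Euclidean dot product on `ℝ^d`. -/
def dot (x ξ : Rd d) : ℝ := ∑ j, x j * ξ j

/-- Discrete Laplacian `Δ_h` on `hℤ^d`. -/
def dLap (h : ℝ) (g : LatPt d → ℂ) : LatPt d → ℂ := fun n =>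
  ∑ j, (g (n + unitVec d j) + g (n - unitVec d j) - 2 * g n) / (h : ℂ) ^ 2

/-- Forward discrete gradient `∇⁺_{h,j}` in direction `j`. -/
def fwdGrad (h : ℝ) (j : Fin d) (g : LatPt d → ℂ) : LatPt d → ℂ := fun n =>
  (g (n + unitVec d j) - g n) / (h : ℂ)

/-- `h^d Σ_a |g(a)|^p`, i.e. `‖g‖_{L^p_h}^p`. -/
def dLpSum (h p : ℝ) (g : LatPt d → ℂ) : ℝ := h ^ d * ∑' n : LatPt d, ‖g n‖ ^ p

/-- Discrete `L^p_h` norm. -/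
def dLpNorm (h p : ℝ) (g : LatPt d → ℂ) : ℝ := dLpSum h p g ^ (1 / p)

/-- Square of the discrete `L²_h` norm. -/
def dL2Sq (h : ℝ) (g : LatPt d → ℂ) : ℝ := h ^ d * ∑' n : LatPt d, ‖g n‖ ^ (2 : ℕ)

/-- Square of the discrete `L²_h` norm of the forward gradient `∇⁺_h g`. -/
def dGradSq (h : ℝ) (g : LatPt d → ℂ) : ℝ :=
  h ^ d * ∑' n : LatPt d, ∑ j, ‖fwdGrad h j g n‖ ^ (2 : ℕ)

/-- Discrete Fourier transform on `hℤ^d`: `ĝ(ξ) = h^d Σ_a g(a) e^{-i a·ξ}`. -/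
def dft (h : ℝ) (g : LatPt d → ℂ) (ξ : Rd d) : ℂ :=
  (h : ℂ) ^ d * ∑' n : LatPt d, g n * Complex.exp (-Complex.I * (dot (latx h n) ξ : ℂ))

/-- Fundamental domain `[-π/h, π/h)^d` of the torus `T_h^d`. -/
def torus (h : ℝ) (d : ℕ) : Set (Rd d) := univ.pi fun _ : Fin d => Ico (-(π / h)) (π / h)

/-- Symbol `1 + (4/h²) Σ_j sin²(hξ_j/2)` of `1 - Δ_h`. -/
def dSymb (h : ℝ) (ξ : Rd d) : ℝ := 1 + 4 / h ^ 2 * ∑ j, Real.sin (h * ξ j / 2) ^ 2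

/-- Square of the discrete Sobolev `H^s_h` norm. -/
def dSobSq (h s : ℝ) (g : LatPt d → ℂ) : ℝ :=
  (2 * π) ^ (-(d : ℝ)) * ∫ ξ in torus h d, dSymb h ξ ^ s * ‖dft h g ξ‖ ^ (2 : ℕ)

/-- Discrete Sobolev `H^s_h` norm. -/
def dSobNorm (h s : ℝ) (g : LatPt d → ℂ) : ℝ := Real.sqrt (dSobSq h s g)

/-- Fourier transform on `ℝ^d` with convention `F f(ξ) = ∫ f(x) e^{-i x·ξ} dx`. -/
def FT (f : Rd d → ℂ) (ξ : Rd d) : ℂ :=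
  ∫ x : Rd d, f x * Complex.exp (-Complex.I * (dot x ξ : ℂ))

/-- Square of the Sobolev `H^s(ℝ^d)` norm. -/
def sobSq (s : ℝ) (f : Rd d → ℂ) : ℝ :=
  (2 * π) ^ (-(d : ℝ)) * ∫ ξ : Rd d, (1 + ∑ j, ξ j ^ 2) ^ s * ‖FT f ξ‖ ^ (2 : ℕ)

/-- Sobolev `H^s(ℝ^d)` norm. -/
def sobNorm (s : ℝ) (f : Rd d → ℂ) : ℝ := Real.sqrt (sobSq s f)

/-- Membership in `H^s(ℝ^d)`: `f ∈ L²` and the weighted Fourier transform is integrable. -/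
def MemHs (s : ℝ) (f : Rd d → ℂ) : Prop :=
  MemLp f 2 volume ∧
    Integrable (fun ξ : Rd d => (1 + ∑ j, ξ j ^ 2) ^ s * ‖FT f ξ‖ ^ (2 : ℕ))

/-- Discrete `L²_h` membership. -/
def MemL2h (g : LatPt d → ℂ) : Prop := Summable fun n : LatPt d => ‖g n‖ ^ (2 : ℕ)

/-- The cell `a + [-h/2, h/2)^d` around the lattice point `a = h n`. -/
def cell (h : ℝ) (n : LatPt d) : Set (Rd d) :=
  univ.pi fun j => Ico (h * (n j : ℝ) - h / 2) (h * (n j : ℝ) + h / 2)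

/-- Mean projection `π_h` onto the lattice. -/
def meanProj (h : ℝ) (φ : Rd d → ℂ) : LatPt d → ℂ := fun n => (h ^ d)⁻¹ • ∫ x in cell h n, φ x

/-- Shannon interpolation `S_h`. -/
def shannon (h : ℝ) (u : LatPt d → ℂ) : Rd d → ℂ := fun x =>
  (2 * π) ^ (-(d : ℝ)) • ∫ ξ in torus h d, dft h u ξ * Complex.exp (Complex.I * (dot x ξ : ℂ))

/-- Discrete Fourier multiplier with symbol `m`. -/
def dMult (h : ℝ) (m : Rd d → ℂ) (u : LatPt d → ℂ) : LatPt d → ℂ := fun n =>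
  (2 * π) ^ (-(d : ℝ)) •
    ∫ ξ in torus h d, m ξ * dft h u ξ * Complex.exp (Complex.I * (dot (latx h n) ξ : ℂ))

/-- Continuous Fourier multiplier with symbol `m`. -/
def cMult (m : Rd d → ℂ) (f : Rd d → ℂ) : Rd d → ℂ := fun x =>
  (2 * π) ^ (-(d : ℝ)) • ∫ ξ : Rd d, m ξ * FT f ξ * Complex.exp (Complex.I * (dot x ξ : ℂ))

/-- Discrete dispersion relation `ω_h(ξ) = (1 + (4/h²) Σ_j sin²(hξ_j/2))^{1/2}`. -/
def ωh (h : ℝ) (ξ : Rd d) : ℝ := Real.sqrt (dSymb h ξ)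

/-- Continuous dispersion relation `(1 + |ξ|²)^{1/2}`. -/
def ωc (ξ : Rd d) : ℝ := Real.sqrt (1 + ∑ j, ξ j ^ 2)

/-- Discrete propagator `K̇_h(t) = cos(t √(1-Δ_h))`. -/
def KdotD (h t : ℝ) : (LatPt d → ℂ) → LatPt d → ℂ :=
  dMult h fun ξ => (Real.cos (t * ωh h ξ) : ℂ)

/-- Discrete propagator `K_h(t) = sin(t √(1-Δ_h))/√(1-Δ_h)`. -/
def KD (h t : ℝ) : (LatPt d → ℂ) → LatPt d → ℂ :=
  dMult h fun ξ => (Real.sin (t * ωh h ξ) / ωh h ξ : ℂ)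

/-- Continuous propagator `K̇(t) = cos(t √(1-Δ))`. -/
def KdotC (t : ℝ) : (Rd d → ℂ) → Rd d → ℂ := cMult fun ξ => (Real.cos (t * ωc ξ) : ℂ)

/-- Continuous propagator `K(t) = sin(t √(1-Δ))/√(1-Δ)`. -/
def KC (t : ℝ) : (Rd d → ℂ) → Rd d → ℂ := cMult fun ξ => (Real.sin (t * ωc ξ) / ωc ξ : ℂ)

/-- Power nonlinearity `|z|^{p-1} z`. -/
def nlin (p : ℝ) (z : ℂ) : ℂ := (‖z‖ ^ (p - 1) : ℝ) * z

/-- `u` solves the discrete nonlinear Klein–Gordon equation (DNLKG) at time `t`. -/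
def DNLKGat (h p : ℝ) (u : ℝ → LatPt d → ℂ) (t : ℝ) : Prop :=
  ∀ n, iteratedDeriv 2 (fun s => u s n) t - dLap h (u t) n + u t n + nlin p (u t n) = 0

/-- `u` solves (DNLKG) globally in time. -/
def IsDNLKG (h p : ℝ) (u : ℝ → LatPt d → ℂ) : Prop := ∀ t, DNLKGat h p u t

/-- Laplacian on `ℝ^d` via coordinatewise second derivatives. -/
def cLap (f : Rd d → ℂ) (x : Rd d) : ℂ :=
  ∑ j, iteratedDeriv 2 (fun r : ℝ => f (Function.update x j r)) (x j)

/-- `φ` solves the nonlinear Klein–Gordon equation (NLKG) on `ℝ^d`. -/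
def IsNLKG (p : ℝ) (φ : ℝ → Rd d → ℂ) : Prop :=
  ∀ t x, iteratedDeriv 2 (fun s => φ s x) t - cLap (φ t) x + φ t x + nlin p (φ t x) = 0

/-- The parameter condition (param): `1 < p` for `d = 1, 2` and `1 < p < 3` for `d = 3`. -/
def Param (d : ℕ) (p : ℝ) : Prop := 1 < p ∧ (d = 3 → p < 3)

/-- Conserved energy of (DNLKG). -/
def energy (h p : ℝ) (u : ℝ → LatPt d → ℂ) (t : ℝ) : ℝ :=
  2⁻¹ * dL2Sq h (fun n => deriv (fun s => u s n) t) + 2⁻¹ * dGradSq h (u t) +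
    2⁻¹ * dL2Sq h (u t) + (p + 1)⁻¹ * dLpSum h (p + 1) (u t)

/-- Modified energy `𝓔`. -/
def modEnergy (h : ℝ) (u : ℝ → LatPt d → ℂ) (t : ℝ) : ℝ :=
  2⁻¹ * (dL2Sq h (fun n => iteratedDeriv 2 (fun s => u s n) t) +
    dGradSq h (fun n => deriv (fun s => u s n) t) +
    dL2Sq h (fun n => deriv (fun s => u s n) t))

/-- Higher modified energies `𝓔_k`. -/
def modEnergyK (h : ℝ) (k : ℕ) (u : ℝ → LatPt d → ℂ) (t : ℝ) : ℝ :=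
  2⁻¹ * (dL2Sq h (fun n => iteratedDeriv (k + 1) (fun s => u s n) t) +
    dGradSq h (fun n => iteratedDeriv k (fun s => u s n) t) +
    dL2Sq h (fun n => iteratedDeriv k (fun s => u s n) t))

/-- Smoothness in time of each lattice value. -/
def TimeSmooth (u : ℝ → LatPt d → ℂ) : Prop := ∀ n, ContDiff ℝ (⊤ : ℕ∞) fun t => u t n

/-- Discrete (unnormalized) hermitian inner product `⟨f, g⟩_h = h^d Σ_a f(a) conj(g(a))`. -/
def dInner (h : ℝ) (f g : LatPt d → ℂ) : ℂ := (h : ℂ) ^ d * ∑' n : LatPt d, f n * starRingEnd ℂ (g n)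

/-- Normalized cardinal sine. -/
def sinc (x : ℝ) : ℝ := if x = 0 then 1 else Real.sin x / x

/-- Wave-type dispersion relation `γ_h(ξ) = (h² + 2 Σ_j (1 - cos ξ_j))^{1/2}`. -/
def γh (h : ℝ) (ξ : Rd d) : ℝ := Real.sqrt (h ^ 2 + 2 * ∑ j, (1 - Real.cos (ξ j)))

/-- Discrete half-wave group `e^{-it√(1-Δ_h)}`. -/
def halfWave (h t : ℝ) : (LatPt d → ℂ) → LatPt d → ℂ :=
  dMult h fun ξ => Complex.exp (-Complex.I * (t * ωh h ξ : ℂ))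

/-- Littlewood–Paley projector `P_N` with symbol `η(hξ/N)`. -/
def PN (h N : ℝ) (η : Rd d → ℝ) : (LatPt d → ℂ) → LatPt d → ℂ :=
  dMult h fun ξ => (η (fun j => h * ξ j / N) : ℂ)


/-- discrete Gronwall-type induction. -/
theorem discrete_gronwall_induction
    (ε C : ℝ) (hε : ε ∈ Ioo (0:ℝ) 1) (hC : 0 < C) (α : ℕ → ℝ)
    (hα1 : ∀ n, 1 ≤ α n)
    (hrec : ∀ n, α (n + 1) ≤ α n + C * α n ^ ((1 + ε) / 2)) :
    ∃ C' > 0, ∀ n : ℕ, α n ≤ C' * (1 + (n : ℝ)) ^ (2 / (1 - ε)) := by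
  obtain ⟨hε0, hε1⟩ := hε
  set β : ℝ := 2 / (1 - ε) with hβdef
  have h1ε : (0:ℝ) < 1 - ε := by linarith
  have hβ1 : 1 ≤ β := by
    rw [hβdef, le_div_iff₀ h1ε]; linarith
  have hβpos : 0 < β := lt_of_lt_of_le one_pos hβ1
  set A : ℝ := max C (α 0) with hAdef
  have hA1 : 1 ≤ A := le_trans (hα1 0) (le_max_right _ _)
  have hApos : 0 < A := lt_of_lt_of_le one_pos hA1
  have hCA : C ≤ A := le_max_left _ _
  have hexp : β * ((1 + ε) / 2) = β - 1 := by
    rw [hβdef]; field_simp; ring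
  refine ⟨A ^ β, Real.rpow_pos_of_pos hApos β, ?_⟩
  intro n
  induction n with
  | zero =>
    simp only [Nat.cast_zero, add_zero, Real.one_rpow, mul_one]
    calc α 0 ≤ A := le_max_right _ _
      _ = A ^ (1:ℝ) := (Real.rpow_one A).symm
      _ ≤ A ^ β := Real.rpow_le_rpow_of_exponent_le hA1 hβ1
  | succ n ih =>
    have hnpos : (0:ℝ) < 1 + (n:ℝ) := by positivity
    have hαn : 0 ≤ α n := le_trans zero_le_one (hα1 n)
    have hpow : α n ^ ((1 + ε) / 2) ≤ A ^ (β - 1) * (1 + (n:ℝ)) ^ (β - 1) := by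
      have h1 : α n ^ ((1 + ε) / 2) ≤ (A ^ β * (1 + (n:ℝ)) ^ β) ^ ((1 + ε) / 2) :=
        Real.rpow_le_rpow hαn ih (by positivity)
      rw [Real.mul_rpow (by positivity) (by positivity),
        ← Real.rpow_mul hApos.le, ← Real.rpow_mul hnpos.le, hexp] at h1
      · exact h1
    have hbern : (1 + (n:ℝ)) ^ β + β * (1 + (n:ℝ)) ^ (β - 1) ≤ (1 + ((n:ℝ) + 1)) ^ β := by
      have hs : (-1:ℝ) ≤ 1 / (1 + (n:ℝ)) := by
        have : (0:ℝ) ≤ 1 / (1 + (n:ℝ)) := by positivity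
        linarith
      have hb := one_add_mul_self_le_rpow_one_add hs hβ1
      have key : (1 + ((n:ℝ) + 1)) ^ β = (1 + 1 / (1 + (n:ℝ))) ^ β * (1 + (n:ℝ)) ^ β := by
        rw [← Real.mul_rpow (by positivity) hnpos.le]
        congr 1
        field_simp
        ring
      rw [key]
      have h2 : (1 + β * (1 / (1 + (n:ℝ)))) * (1 + (n:ℝ)) ^ β ≤
          (1 + 1 / (1 + (n:ℝ))) ^ β * (1 + (n:ℝ)) ^ β := by
        apply mul_le_mul_of_nonneg_right hb (by positivity)
      refine le_trans ?_ h2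
      have h3 : (1 + (n:ℝ)) ^ (β - 1) * (1 + (n:ℝ)) = (1 + (n:ℝ)) ^ β := by
        nth_rewrite 2 [← Real.rpow_one (1 + (n:ℝ))]
        rw [← Real.rpow_add hnpos, sub_add_cancel]
      have h4 : β * (1 + (n:ℝ)) ^ (β - 1) = β * (1 / (1 + (n:ℝ))) * (1 + (n:ℝ)) ^ β := by
        rw [← h3]; field_simp
      rw [h4]; ring_nf; rfl
    have hAA : A ^ (β - 1) * A = A ^ β := by
      nth_rewrite 2 [← Real.rpow_one A]
      rw [← Real.rpow_add hApos, sub_add_cancel]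
    calc α (n + 1) ≤ α n + C * α n ^ ((1 + ε) / 2) := hrec n
      _ ≤ A ^ β * (1 + (n:ℝ)) ^ β + C * (A ^ (β - 1) * (1 + (n:ℝ)) ^ (β - 1)) := by
          have := mul_le_mul_of_nonneg_left hpow hC.le
          linarith [ih]
      _ ≤ A ^ β * (1 + (n:ℝ)) ^ β + β * A ^ β * (1 + (n:ℝ)) ^ (β - 1) := by
          have h5 : C * A ^ (β - 1) ≤ β * A ^ β := by
            calc C * A ^ (β - 1) ≤ A * A ^ (β - 1) :=
                  mul_le_mul_of_nonneg_right hCA (by positivity)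
              _ = A ^ β := by rw [mul_comm]; exact hAA
              _ ≤ β * A ^ β := le_mul_of_one_le_left (by positivity) hβ1
          have := mul_le_mul_of_nonneg_right h5 (Real.rpow_nonneg hnpos.le (β - 1))
          nlinarith [Real.rpow_nonneg hnpos.le (β - 1)]
      _ = A ^ β * ((1 + (n:ℝ)) ^ β + β * (1 + (n:ℝ)) ^ (β - 1)) := by ring
      _ ≤ A ^ β * (1 + ((n:ℝ) + 1)) ^ β := by
          apply mul_le_mul_of_nonneg_left hbern (by positivity)
      _ = A ^ β * (1 + ((n + 1 : ℕ):ℝ)) ^ β := by push_cast; ring_nf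

end
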